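/- arXiv:1803.05825 — 6 statements merged into one kernel-verified Lean document; each statement's English description precedes it below -/
import Mathlib

section
/- If every edge of M' \ M* is incident to exactly two edges of M*, then |M*| ≥ |M'|. Here M' and M* are matchings in a graph G. -/
def IsMatching {V : Type*} (G : SimpleGraph V) (M : Finset (Sym2 V)) : Prop :=
  (∀ e ∈ M, e ∈ G.edgeSet) ∧
  ∀ e ∈ M, ∀ f ∈ M, e ≠ f → ∀ v : V, v ∈ e → v ∉ f

/-!
Double counting of vertices. Every edge of `M' \ M*` has two distinct endpoints, and each of them
lies in an edge of `M*` that is not in `M'` (it cannot be in `M'`, which is a matching). The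
`2 |M' \ M*|` endpoints of the matching `M' \ M*` are thus among the at most `2 |M* \ M'|` endpoints
of `M* \ M'`, so `|M' \ M*| ≤ |M* \ M'|`, which is equivalent to `|M'| ≤ |M*|`.
-/

open Finset

lemma card_le_card_of_vertices_covered {V : Type*} [DecidableEq V] {A N : Finset (Sym2 V)}
    (hA : (A : Set (Sym2 V)).PairwiseDisjoint Sym2.toFinset)
    (hdiag : ∀ e ∈ A, ¬e.IsDiag) (hcover : ∀ e ∈ A, ∀ v ∈ e, ∃ f ∈ N, v ∈ f) :
    #A ≤ #N := by
  have hsub : A.biUnion Sym2.toFinset ⊆ N.biUnion Sym2.toFinset := by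
    intro v hv
    obtain ⟨e, he, hve⟩ := mem_biUnion.mp hv
    obtain ⟨f, hf, hvf⟩ := hcover e he v (Sym2.mem_toFinset.mp hve)
    exact mem_biUnion.mpr ⟨f, hf, Sym2.mem_toFinset.mpr hvf⟩
  have : 2 * #A ≤ 2 * #N :=
    calc 2 * #A = ∑ e ∈ A, #e.toFinset := by
          rw [sum_congr rfl fun e he => Sym2.card_toFinset_of_not_isDiag e (hdiag e he),
            sum_const, smul_eq_mul, mul_comm]
      _ = #(A.biUnion Sym2.toFinset) := (card_biUnion hA).symm
      _ ≤ #(N.biUnion Sym2.toFinset) := card_le_card hsub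
      _ ≤ ∑ f ∈ N, #f.toFinset := card_biUnion_le
      _ ≤ ∑ _f ∈ N, 2 := sum_le_sum fun f _ => by rw [Sym2.card_toFinset]; split_ifs <;> omega
      _ = 2 * #N := by rw [sum_const, smul_eq_mul, mul_comm]
  omega

namespace IsMatching

variable {V : Type*} {G : SimpleGraph V} {M : Finset (Sym2 V)}

lemma eq_of_mem_of_mem (hM : IsMatching G M) {e f : Sym2 V} (he : e ∈ M) (hf : f ∈ M) {v : V}
    (hve : v ∈ e) (hvf : v ∈ f) : e = f := by
  by_contra hne
  exact hM.2 e he f hf hne v hve hvf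

lemma pairwiseDisjoint_toFinset [DecidableEq V] (hM : IsMatching G M) :
    (M : Set (Sym2 V)).PairwiseDisjoint Sym2.toFinset := by
  intro e he f hf hne
  refine disjoint_left.mpr fun v hve hvf => hne ?_
  exact hM.eq_of_mem_of_mem he hf (Sym2.mem_toFinset.mp hve) (Sym2.mem_toFinset.mp hvf)

end IsMatching

section Bad

variable {V : Type*} [DecidableEq V] {G : SimpleGraph V} {Mstar M' : Finset (Sym2 V)}

lemma mem_sdiff_of_mem_of_shares_vertex (hM' : IsMatching G M') {e f : Sym2 V}
    (he : e ∈ M' \ Mstar) (hf : f ∈ Mstar) {v : V} (hve : v ∈ e) (hvf : v ∈ f) :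
    f ∈ Mstar \ M' := by
  refine mem_sdiff.mpr ⟨hf, fun hfM' => ?_⟩
  have hef : e = f := hM'.eq_of_mem_of_mem (mem_sdiff.mp he).1 hfM' hve hvf
  exact (mem_sdiff.mp he).2 (hef ▸ hf)

lemma not_isDiag_and_covered_of_bad (hMstar : IsMatching G Mstar) (hM' : IsMatching G M')
    {e : Sym2 V} (he : e ∈ M' \ Mstar) {f g : Sym2 V} (hf : f ∈ Mstar) (hg : g ∈ Mstar)
    (hfg : f ≠ g) {v w : V} (hve : v ∈ e) (hvf : v ∈ f) (hwe : w ∈ e) (hwg : w ∈ g) :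
    ¬e.IsDiag ∧ ∀ u ∈ e, ∃ h ∈ Mstar \ M', u ∈ h := by
  have hvw : v ≠ w := by
    rintro rfl
    exact hfg (hMstar.eq_of_mem_of_mem hf hg hvf hwg)
  obtain rfl : e = s(v, w) := (Sym2.mem_and_mem_iff hvw).mp ⟨hve, hwe⟩
  refine ⟨Sym2.mk_isDiag_iff.not.mpr hvw, fun u hu => ?_⟩
  rcases Sym2.mem_iff.mp hu with rfl | rfl
  · exact ⟨f, mem_sdiff_of_mem_of_shares_vertex hM' he hf hve hvf, hvf⟩
  · exact ⟨g, mem_sdiff_of_mem_of_shares_vertex hM' he hg hwe hwg, hwg⟩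

end Bad

theorem stmt0_general {V : Type*} [DecidableEq V] (G : SimpleGraph V)
    (Mstar M' : Finset (Sym2 V))
    (hMstar : IsMatching G Mstar) (hM' : IsMatching G M')
    (bad : ∀ e ∈ M' \ Mstar, ∃ f ∈ Mstar, ∃ g ∈ Mstar, f ≠ g ∧
      (∃ v : V, v ∈ e ∧ v ∈ f) ∧ (∃ v : V, v ∈ e ∧ v ∈ g)) :
    M'.card ≤ Mstar.card := by
  have hbad : ∀ e ∈ M' \ Mstar, ¬e.IsDiag ∧ ∀ u ∈ e, ∃ h ∈ Mstar \ M', u ∈ h := by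
    intro e he
    obtain ⟨f, hf, g, hg, hfg, ⟨v, hve, hvf⟩, ⟨w, hwe, hwg⟩⟩ := bad e he
    exact not_isDiag_and_covered_of_bad hMstar hM' he hf hg hfg hve hvf hwe hwg
  rw [← card_sdiff_le_card_sdiff_iff]
  exact card_le_card_of_vertices_covered
    (hM'.pairwiseDisjoint_toFinset.subset (coe_subset.mpr sdiff_subset))
    (fun e he => (hbad e he).1) (fun e he => (hbad e he).2)

/-- If every edge of `M' \ M*` is "bad", i.e. incident to two distinct edges of `M*`
(one at each endpoint), then `|M*| ≥ |M'|`. -/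
theorem stmt0 {V : Type*} [Fintype V] [DecidableEq V] (G : SimpleGraph V)
    (Mstar M' : Finset (Sym2 V))
    (hMstar : IsMatching G Mstar) (hM' : IsMatching G M')
    (bad : ∀ e ∈ M' \ Mstar, ∃ f ∈ Mstar, ∃ g ∈ Mstar, f ≠ g ∧
      (∃ v : V, v ∈ e ∧ v ∈ f) ∧ (∃ v : V, v ∈ e ∧ v ∈ g)) :
    M'.card ≤ Mstar.card :=
  stmt0_general G Mstar M' hMstar hM' bad
end

section
/- Let M and M' be matchings in a graph G with |M| < |M'|. Then there exists a finite sequence of matchings M = M_0, M_1, ..., M_k with M_k ⊇ M', such that each M_{i+1} is obtained from M_i by adding one edge of M' and removing at most two edges of M_i (those incident to the added edge), and |M_i| ≥ min(|M|, |M'| − 1) for all i. -/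
set_option linter.unusedSectionVars false
set_option linter.unusedVariables false

namespace StmtAux

open Finset

variable {V : Type*} [Fintype V] [DecidableEq V]

/-- The two endpoints of an edge, as a `Finset`. -/
def ends (e : Sym2 V) : Finset V := Sym2.lift ⟨fun a b => {a, b}, fun a b => by
  simp [Finset.pair_comm]⟩ e

@[simp] lemma mem_ends {x : V} {e : Sym2 V} : x ∈ ends e ↔ x ∈ e := by
  induction e using Sym2.ind with
  | _ a b => simp [ends]

lemma card_ends {e : Sym2 V} (h : ¬ e.IsDiag) : (ends e).card = 2 := by
  induction e using Sym2.ind with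
  | _ a b =>
    simp only [Sym2.isDiag_iff_proj_eq] at h
    simp [ends, Finset.card_pair h]

lemma matching_subset {G : SimpleGraph V} {S T : Finset (Sym2 V)} (h : IsMatching G T)
    (hs : S ⊆ T) : IsMatching G S :=
  ⟨fun e he => h.1 e (hs he), fun e he f hf => h.2 e (hs he) f (hs hf)⟩

/-- Vertices covered by an edge set. -/
def cov (S : Finset (Sym2 V)) : Finset V := S.biUnion ends

lemma card_cov {G : SimpleGraph V} {S : Finset (Sym2 V)} (h : IsMatching G S) :
    (cov S).card = 2 * S.card := by
  rw [cov, card_biUnion]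
  · rw [Finset.sum_congr rfl (fun e he => card_ends (G.not_isDiag_of_mem_edgeSet (h.1 e he)))]
    simp [mul_comm]
  · intro e he f hf hef
    simp only [Finset.disjoint_left]
    intro x hx hx'
    exact h.2 e he f hf hef x (mem_ends.1 hx) (mem_ends.1 hx')

lemma at_most_one {G : SimpleGraph V} {N : Finset (Sym2 V)} (hN : IsMatching G N) (v : V) :
    (N.filter (fun f => v ∈ f)).card ≤ 1 := by
  refine card_le_one.2 ?_
  intro f hf g hg
  simp only [mem_filter] at hf hg
  by_contra hne
  exact hN.2 f hf.1 g hg.1 hne v hf.2 hg.2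

/-- Case B counting: if every endpoint of every edge of `M' \ N` is covered by `N`,
then `M'.card ≤ N.card`. -/
lemma caseB {G : SimpleGraph V} {N M' : Finset (Sym2 V)} (hN : IsMatching G N)
    (hM' : IsMatching G M')
    (hB : ∀ e ∈ M' \ N, ∀ v : V, v ∈ e → ∃ f ∈ N, v ∈ f) : M'.card ≤ N.card := by
  have h1 : cov (M' \ N) ⊆ cov (N \ M') := by
    intro x hx
    simp only [cov, mem_biUnion, mem_ends] at hx ⊢
    obtain ⟨e, he, hxe⟩ := hx
    obtain ⟨f, hf, hxf⟩ := hB e he x hxe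
    refine ⟨f, mem_sdiff.2 ⟨hf, fun hfM' => ?_⟩, hxf⟩
    have hem : e ∈ M' := (mem_sdiff.1 he).1
    by_cases hef : e = f
    · exact (mem_sdiff.1 he).2 (hef ▸ hf)
    · exact hM'.2 e hem f hfM' hef x hxe hxf
  have h2 := card_le_card h1
  rw [card_cov (matching_subset hM' (sdiff_subset)),
    card_cov (matching_subset hN (sdiff_subset))] at h2
  have h3 : (M' \ N).card ≤ (N \ M').card := by omega
  have h4 := card_sdiff_add_card_inter M' N
  have h5 := card_sdiff_add_card_inter N M'
  rw [inter_comm] at h5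
  omega

lemma step_matching {G : SimpleGraph V} {N : Finset (Sym2 V)} (hN : IsMatching G N)
    {e : Sym2 V} (he : e ∈ G.edgeSet) :
    IsMatching G (insert e (N.filter fun f => ∀ v : V, v ∈ e → v ∉ f)) := by
  constructor
  · intro f hf
    rcases mem_insert.1 hf with rfl | hf
    · exact he
    · exact hN.1 f (mem_filter.1 hf).1
  · intro f hf g hg hfg v hvf hvg
    rcases mem_insert.1 hf with rfl | hf <;> rcases mem_insert.1 hg with rfl | hg
    · exact hfg rfl
    · exact (mem_filter.1 hg).2 v hvf hvg
    · exact (mem_filter.1 hf).2 v hvg hvf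
    · exact hN.2 f (mem_filter.1 hf).1 g (mem_filter.1 hg).1 hfg v hvf hvg

/-- The removed edges number at most 2. -/
lemma removed_le_two {G : SimpleGraph V} {N : Finset (Sym2 V)} (hN : IsMatching G N)
    {e : Sym2 V} (he : e ∈ G.edgeSet) :
    (N.filter fun f => ¬ ∀ v : V, v ∈ e → v ∉ f).card ≤ 2 := by
  induction e using Sym2.ind with
  | _ a b =>
    have hsub : (N.filter fun f => ¬ ∀ v : V, v ∈ s(a, b) → v ∉ f) ⊆
        (N.filter fun f => a ∈ f) ∪ (N.filter fun f => b ∈ f) := by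
      intro f hf
      simp only [mem_filter, not_forall] at hf
      obtain ⟨hfN, v, hv, hvf⟩ := hf
      rw [not_not] at hvf
      rcases Sym2.mem_iff.1 hv with rfl | rfl
      · exact mem_union.2 (Or.inl (mem_filter.2 ⟨hfN, hvf⟩))
      · exact mem_union.2 (Or.inr (mem_filter.2 ⟨hfN, hvf⟩))
    calc _ ≤ _ := card_le_card hsub
      _ ≤ _ := card_union_le _ _
      _ ≤ 2 := by
        have := at_most_one hN a
        have := at_most_one hN b
        omega

/-- If some endpoint of `e` is uncovered by `N`, at most one edge is removed. -/
lemma removed_le_one {G : SimpleGraph V} {N : Finset (Sym2 V)} (hN : IsMatching G N)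
    {e : Sym2 V} {v : V} (hv : v ∈ e) (hcov : ∀ f ∈ N, v ∉ f) :
    (N.filter fun f => ¬ ∀ x : V, x ∈ e → x ∉ f).card ≤ 1 := by
  obtain ⟨w, rfl⟩ := Sym2.mem_iff_exists.1 hv
  have hsub : (N.filter fun f => ¬ ∀ x : V, x ∈ s(v, w) → x ∉ f) ⊆
      N.filter fun f => w ∈ f := by
    intro f hf
    simp only [mem_filter, not_forall] at hf
    obtain ⟨hfN, x, hx, hxf⟩ := hf
    rw [not_not] at hxf
    rcases Sym2.mem_iff.1 hx with rfl | rfl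
    · exact absurd hxf (hcov f hfN)
    · exact mem_filter.2 ⟨hfN, hxf⟩
  exact le_trans (card_le_card hsub) (at_most_one hN w)

lemma main {G : SimpleGraph V} {M' : Finset (Sym2 V)} (hM' : IsMatching G M') :
    ∀ n (N : Finset (Sym2 V)), (M' \ N).card = n → IsMatching G N →
    ∃ (k : ℕ) (Ms : ℕ → Finset (Sym2 V)),
      Ms 0 = N ∧ M' ⊆ Ms k ∧
      (∀ i < k, ∃ e ∈ M' \ Ms i,
        Ms (i + 1) = insert e ((Ms i).filter fun f => ∀ v : V, v ∈ e → v ∉ f)) ∧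
      ∀ i ≤ k, IsMatching G (Ms i) ∧ min N.card (M'.card - 1) ≤ (Ms i).card := by
  intro n
  induction n using Nat.strong_induction_on with
  | _ n ih =>
    intro N hn hN
    by_cases h0 : M' ⊆ N
    · exact ⟨0, fun _ => N, rfl, h0, fun i hi => absurd hi (Nat.not_lt_zero i),
        fun i _ => ⟨hN, min_le_left _ _⟩⟩
    -- pick a suitable edge e ∈ M' \ N
    have hne : (M' \ N).Nonempty := by
      rw [sdiff_nonempty]; exact h0
    have hpick : ∃ e ∈ M' \ N,
        (N.filter fun f => ¬ ∀ v : V, v ∈ e → v ∉ f).card ≤ 1 ∨ M'.card ≤ N.card := by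
      by_cases hA : ∃ e ∈ M' \ N, ∃ v : V, v ∈ e ∧ ∀ f ∈ N, v ∉ f
      · obtain ⟨e, he, v, hv, hcov⟩ := hA
        exact ⟨e, he, Or.inl (removed_le_one hN hv hcov)⟩
      · push_neg at hA
        obtain ⟨e, he⟩ := hne
        refine ⟨e, he, Or.inr (caseB hN hM' ?_)⟩
        intro e' he' v hv
        obtain ⟨f, hf, hvf⟩ := hA e' he' v hv
        exact ⟨f, hf, hvf⟩
    obtain ⟨e, he, hcase⟩ := hpick
    have heM' : e ∈ M' := (mem_sdiff.1 he).1
    have heN : e ∉ N := (mem_sdiff.1 he).2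
    have heG : e ∈ G.edgeSet := hM'.1 e heM'
    set N1 := insert e (N.filter fun f => ∀ v : V, v ∈ e → v ∉ f) with hN1def
    have hN1 : IsMatching G N1 := step_matching hN heG
    have hcards := card_filter_add_card_filter_not
      (s := N) (p := fun f => ∀ v : V, v ∈ e → v ∉ f)
    have hcard1 : N1.card = (N.filter fun f => ∀ v : V, v ∈ e → v ∉ f).card + 1 := by
      rw [hN1def, card_insert_of_notMem (fun h => heN (mem_filter.1 h).1)]
    have hrem2 := removed_le_two hN heG
    have hNcard : N.card - 1 ≤ N1.card ∧ (N.card ≤ N1.card ∨ M'.card ≤ N.card) := by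
      constructor
      · omega
      · rcases hcase with h | h
        · left; omega
        · right; exact h
    -- strictly fewer missing edges
    have hdec : (M' \ N1).card < n := by
      have hsub : M' \ N1 ⊆ (M' \ N).erase e := by
        intro f hf
        obtain ⟨hfM', hfN1⟩ := mem_sdiff.1 hf
        have hfe : f ≠ e := fun h => hfN1 (h ▸ mem_insert_self e _)
        refine mem_erase.2 ⟨hfe, mem_sdiff.2 ⟨hfM', fun hfN => ?_⟩⟩
        exact hfN1 (mem_insert.2 (Or.inr (mem_filter.2 ⟨hfN,
          fun v hv hv' => hM'.2 e heM' f hfM' (fun h => hfe h.symm) v hv hv'⟩)))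
      calc (M' \ N1).card ≤ ((M' \ N).erase e).card := card_le_card hsub
        _ < (M' \ N).card := card_erase_lt_of_mem he
        _ = n := hn
    obtain ⟨k, Ms, hMs0, hMssub, hMsstep, hMsbnd⟩ := ih _ hdec N1 rfl hN1
    refine ⟨k + 1, fun i => Nat.rec N (fun j _ => Ms j) i, rfl, hMssub, ?_, ?_⟩
    · intro i hi
      cases i with
      | zero => exact ⟨e, he, hMs0.trans hN1def⟩
      | succ j => exact hMsstep j (by omega)
    · intro i hi
      cases i with
      | zero => exact ⟨hN, min_le_left _ _⟩
      | succ j =>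
        refine ⟨(hMsbnd j (by omega)).1, ?_⟩
        have hb := (hMsbnd j (by omega)).2
        have : min N.card (M'.card - 1) ≤ min N1.card (M'.card - 1) := by omega
        exact le_trans this hb
end StmtAux

/-- Gradual transformation for maximum cardinality matching: given matchings `M`, `M'`
with `|M| < |M'|`, there is a sequence of matchings `M = M_0, M_1, …, M_k` with
`M_k ⊇ M'`, where each `M_{i+1}` is obtained from `M_i` by adding one edge of
`M' \ M_i` and removing the (at most two) edges of `M_i` incident to it, and
`|M_i| ≥ min(|M|, |M'| − 1)` throughout. -/
theorem stmt1 {V : Type*} [Fintype V] [DecidableEq V] (G : SimpleGraph V)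
    (M M' : Finset (Sym2 V)) (hM : IsMatching G M) (hM' : IsMatching G M')
    (hcard : M.card < M'.card) :
    ∃ (k : ℕ) (Ms : ℕ → Finset (Sym2 V)),
      Ms 0 = M ∧ M' ⊆ Ms k ∧
      (∀ i < k, ∃ e ∈ M' \ Ms i,
        Ms (i + 1) = insert e ((Ms i).filter fun f => ∀ v : V, v ∈ e → v ∉ f)) ∧
      ∀ i ≤ k, IsMatching G (Ms i) ∧ min M.card (M'.card - 1) ≤ (Ms i).card := by
  exact StmtAux.main hM' _ M rfl hM
end

section
/- Let M and M' be matchings in a graph G, and suppose every edge of M' \ M that is not incident to two edges of M (i.e., every 'good' edge) has already been processed, meaning there are no good edges in M' \ M*. Then |M* \ M'| ≥ |M' \ M*|. -/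
/-!
Count pairs `(e, f)` with `e ∈ M' \ M*`, `f ∈ M* \ M'` and `e`, `f` sharing a vertex. Every edge of
`M*` that meets some `e ∈ M' \ M*` lies outside `M'`, since `M'` is a matching; so each bad edge
`e` lies in at least two pairs. Conversely an edge `f` has two endpoints, each covered by at most
one edge of the matching `M'`, so `f` lies in at most two pairs. Hence
`2 |M' \ M*| ≤ 2 |M* \ M'|`.
-/

section

open Finset

variable {V : Type*} {G : SimpleGraph V} {M : Finset (Sym2 V)}

lemma IsMatching.mem_sdiff_of_meets [DecidableEq V] {N : Finset (Sym2 V)} (hM : IsMatching G M)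
    {e f : Sym2 V} (he : e ∈ M \ N) (hf : f ∈ N) (hef : ∃ v, v ∈ e ∧ v ∈ f) : f ∈ N \ M := by
  obtain ⟨heM, heN⟩ := mem_sdiff.mp he
  obtain ⟨v, hve, hvf⟩ := hef
  exact mem_sdiff.mpr ⟨hf, fun hfM => hM.2 e heM f hfM (ne_of_mem_of_not_mem hf heN).symm v hve hvf⟩

open Classical in
lemma IsMatching.card_filter_meets_le_two (hM : IsMatching G M) (f : Sym2 V) :
    #{e ∈ M | ∃ v, v ∈ e ∧ v ∈ f} ≤ 2 := by
  let vertexIn (e : Sym2 V) : V := if h : ∃ v, v ∈ e ∧ v ∈ f then h.choose else f.out.1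
  calc #{e ∈ M | ∃ v, v ∈ e ∧ v ∈ f}
      ≤ #f.toFinset := by
        refine card_le_card_of_injOn vertexIn (fun e he => ?_) (fun e₁ he₁ e₂ he₂ heq => ?_)
        · have h := (mem_filter.mp he).2
          simpa [vertexIn, dif_pos h] using h.choose_spec.2
        · obtain ⟨he₁, h₁⟩ := mem_filter.mp he₁
          obtain ⟨he₂, h₂⟩ := mem_filter.mp he₂
          simp only [vertexIn, dif_pos h₁, dif_pos h₂] at heq
          by_contra hne
          exact hM.2 e₁ he₁ e₂ he₂ hne _ h₁.choose_spec.1 (heq ▸ h₂.choose_spec.1)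
    _ ≤ 2 := by rw [Sym2.card_toFinset]; split_ifs <;> norm_num

end

theorem stmt2_general {V : Type*} [DecidableEq V] (G : SimpleGraph V)
    (Mstar M' : Finset (Sym2 V))
    (hM' : IsMatching G M')
    (bad : ∀ e ∈ M' \ Mstar, ∃ f ∈ Mstar, ∃ g ∈ Mstar, f ≠ g ∧
      (∃ v : V, v ∈ e ∧ v ∈ f) ∧ (∃ v : V, v ∈ e ∧ v ∈ g)) :
    (M' \ Mstar).card ≤ (Mstar \ M').card := by
  classical
  let Meets (e f : Sym2 V) : Prop := ∃ v, v ∈ e ∧ v ∈ f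
  have two_le_above : ∀ e ∈ M' \ Mstar, 2 ≤ ((Mstar \ M').bipartiteAbove Meets e).card := by
    intro e he
    obtain ⟨f, hf, g, hg, hfg, hef, heg⟩ := bad e he
    exact Finset.one_lt_card.mpr
      ⟨f, Finset.mem_filter.mpr ⟨hM'.mem_sdiff_of_meets he hf hef, hef⟩,
        g, Finset.mem_filter.mpr ⟨hM'.mem_sdiff_of_meets he hg heg, heg⟩, hfg⟩
  have below_le_two : ∀ f ∈ Mstar \ M', ((M' \ Mstar).bipartiteBelow Meets f).card ≤ 2 :=
    fun f _ => (Finset.card_le_card (Finset.filter_subset_filter _ Finset.sdiff_subset)).trans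
      (hM'.card_filter_meets_le_two f)
  exact le_of_mul_le_mul_right (Finset.card_mul_le_card_mul Meets two_le_above below_le_two)
    two_pos

/-- If every edge of `M' \ M*` is "bad", i.e. incident to two distinct edges of `M*`,
then the number of edges of `M*` not in `M'` is at least the number of edges of
`M'` not in `M*`. -/
theorem stmt2 {V : Type*} [Fintype V] [DecidableEq V] (G : SimpleGraph V)
    (Mstar M' : Finset (Sym2 V))
    (hMstar : IsMatching G Mstar) (hM' : IsMatching G M')
    (bad : ∀ e ∈ M' \ Mstar, ∃ f ∈ Mstar, ∃ g ∈ Mstar, f ≠ g ∧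
      (∃ v : V, v ∈ e ∧ v ∈ f) ∧ (∃ v : V, v ∈ e ∧ v ∈ g)) :
    (M' \ Mstar).card ≤ (Mstar \ M').card :=
  stmt2_general G Mstar M' hM' bad
end

section
/- Let M_t be a β-approximate maximum cardinality matching of a graph G_t, with β ≥ 1. Suppose the graph undergoes at most k ≤ ε'·|M_t| edge insertions and deletions (with ε' ≤ 1/2), resulting in graph G_i, and let M_t^(i) be M_t with all deleted edges removed. Then M_t^(i) is a β(1+2ε')-approximate maximum cardinality matching of G_i. -/
/-- Stability of approximate matchings under few updates: if `Mt` is a `β`-approximate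
maximum matching of `Gt` (every matching `N` of `Gt` has `|N| ≤ β·|Mt|`), and `Gi` is
obtained from `Gt` by deleting a set `D` of edges and inserting a set `I` of edges with
`|D| + |I| ≤ ε'·|Mt|` (where `ε' ≤ 1/2`), then `Mt \ D` is a `β(1+2ε')`-approximate
maximum matching of `Gi`. -/
theorem stmt3 {V : Type*} [Fintype V] [DecidableEq V] (Gt Gi : SimpleGraph V)
    (Mt : Finset (Sym2 V)) (D I : Finset (Sym2 V)) (β ε' : ℝ)
    (hβ : 1 ≤ β) (hε0 : 0 ≤ ε') (hε : ε' ≤ 1 / 2)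
    (hMt : IsMatching Gt Mt)
    (happrox : ∀ N : Finset (Sym2 V), IsMatching Gt N → (N.card : ℝ) ≤ β * Mt.card)
    (hupdate : Gi.edgeSet = (Gt.edgeSet \ (↑D : Set (Sym2 V))) ∪ (↑I : Set (Sym2 V)))
    (hk : ((D.card + I.card : ℕ) : ℝ) ≤ ε' * Mt.card) :
    IsMatching Gi (Mt \ D) ∧
      ∀ N : Finset (Sym2 V), IsMatching Gi N →
        (N.card : ℝ) ≤ β * (1 + 2 * ε') * ((Mt \ D).card : ℝ) := by
  obtain ⟨hMt1, hMt2⟩ := hMt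
  constructor
  · constructor
    · intro e he
      rw [Finset.mem_sdiff] at he
      rw [hupdate]
      exact Or.inl ⟨hMt1 e he.1, by simpa using he.2⟩
    · intro e he f hf
      rw [Finset.mem_sdiff] at he hf
      exact hMt2 e he.1 f hf.1
  · intro N hN
    -- N \ I is a matching of Gt
    have hNI : IsMatching Gt (N \ I) := by
      constructor
      · intro e he
        rw [Finset.mem_sdiff] at he
        have := hN.1 e he.1
        rw [hupdate] at this
        rcases this with h | h
        · exact h.1
        · exact absurd (by simpa using h) he.2
      · intro e he f hf
        rw [Finset.mem_sdiff] at he hf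
        exact hN.2 e he.1 f hf.1
    have h1 : (N.card : ℝ) ≤ ((N \ I).card : ℝ) + I.card := by
      have : N.card ≤ (N \ I).card + I.card := by
        calc N.card ≤ (N ∪ I).card := Finset.card_le_card Finset.subset_union_left
          _ = (N \ I).card + I.card := (Finset.card_sdiff_add_card N I).symm
      exact_mod_cast this
    have h2 : ((N \ I).card : ℝ) ≤ β * Mt.card := happrox _ hNI
    have h3 : (Mt.card : ℝ) ≤ ((Mt \ D).card : ℝ) + D.card := by
      have : Mt.card ≤ (Mt \ D).card + D.card := by
        calc Mt.card ≤ (Mt ∪ D).card := Finset.card_le_card Finset.subset_union_left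
          _ = (Mt \ D).card + D.card := (Finset.card_sdiff_add_card Mt D).symm
      exact_mod_cast this
    have hk' : (D.card : ℝ) + I.card ≤ ε' * Mt.card := by exact_mod_cast hk
    have hD0 : (0 : ℝ) ≤ D.card := Nat.cast_nonneg _
    have hI0 : (0 : ℝ) ≤ I.card := Nat.cast_nonneg _
    have hs0 : (0 : ℝ) ≤ ((Mt \ D).card : ℝ) := Nat.cast_nonneg _
    have hβ0 : (0:ℝ) ≤ β := by linarith
    have key : (1 - ε') * D.card + I.card ≤ ε' * ((Mt \ D).card : ℝ) := by
      nlinarith [mul_le_mul_of_nonneg_left h3 hε0]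
    nlinarith [mul_le_mul_of_nonneg_left key (by positivity : (0:ℝ) ≤ 2 * β),
      mul_le_mul_of_nonneg_left h3 hβ0,
      mul_nonneg (sub_nonneg.2 hβ) hI0,
      mul_nonneg (mul_nonneg hβ0 (by linarith : (0:ℝ) ≤ 1 - 2 * ε')) hD0]
end

section
/- Let T and T' be distinct spanning trees of a connected weighted graph G, let e' be a minimum-weight edge of T' \ T, and let e ∈ C_T(e') \ T'. Then either (a) w(e) ≥ w(e'), in which case T \ {e} ∪ {e'} is a spanning tree with weight at most w(T) and strictly smaller symmetric difference with T', or (b) w(e) < w(e'), in which case for any e'' ∈ C_{T'}(e) \ T, the set T' \ {e''} ∪ {e} is a spanning tree with weight strictly less than w(T') and strictly smaller symmetric difference with T. -/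
/-!
Both alternatives rest on the exchange property of spanning trees: if an edge `e` of a tree `T`
lies on a cycle of `T + e'`, then `T - e + e'` is again a spanning tree. It is connected because
`e` is not a bridge of the connected graph `T + e'`; it is acyclic because the ends of `e'` lie in
different components of `T - e` (otherwise the cycle through `e` could be rerouted inside `T - e`,
although `e` is a bridge of `T`). In case (a) the exchange is `T - e + e'`; in case (b) it is
`T' - e'' + e`, which is strictly lighter since `w e < w e' ≤ w e''` by minimality of `e'`.
Either exchange removes exactly two edges from the symmetric difference.
-/

/-- `T` is a spanning tree of `G`, viewed as a set of edges: its edges are edges of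
`G` and the spanning subgraph with edge set `T` is a tree (connected and acyclic). -/
def IsSpanningTree {V : Type*} (G : SimpleGraph V) (T : Finset (Sym2 V)) : Prop :=
  (↑T : Set (Sym2 V)) ⊆ G.edgeSet ∧
    (SimpleGraph.fromEdgeSet (↑T : Set (Sym2 V))).IsTree

/-- A finite set `C` of edges forms a single (simple) cycle: there is a cycle walk
whose edge set is exactly `C`. -/
def IsCycleEdgeSet {V : Type*} [DecidableEq V] (C : Finset (Sym2 V)) : Prop :=
  ∃ (v : V) (p : (SimpleGraph.fromEdgeSet (↑C : Set (Sym2 V))).Walk v v),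
    p.IsCycle ∧ p.edges.toFinset = C

namespace SimpleGraph

variable {V : Type*} {G : SimpleGraph V}

theorem reachable_sup_edge_iff {c d u v : V} (hcd : G.Reachable c d) :
    (G ⊔ edge c d).Reachable u v ↔ G.Reachable u v := by
  refine ⟨fun huv => ?_, fun huv => huv.mono le_sup_left⟩
  rw [reachable_iff_reflTransGen] at huv ⊢
  refine Relation.ReflTransGen.lift' id (fun x y hxy => ?_) u v huv
  change Relation.ReflTransGen G.Adj x y
  rw [← reachable_iff_reflTransGen]
  rw [sup_adj, edge_adj] at hxy
  rcases hxy with hxy | ⟨⟨rfl, rfl⟩ | ⟨rfl, rfl⟩, -⟩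
  · exact hxy.reachable
  · exact hcd
  · exact hcd.symm

theorem IsTree.deleteEdges_sup_edge (hG : G.IsTree) {a b c d : V} (hab : G.Adj a b)
    (hne : s(a, b) ≠ s(c, d)) (hcyc : ¬(G ⊔ edge c d).IsBridge s(a, b)) :
    (G.deleteEdges {s(a, b)} ⊔ edge c d).IsTree := by
  have hsplit : (G ⊔ edge c d).deleteEdges {s(a, b)} = G.deleteEdges {s(a, b)} ⊔ edge c d := by
    have hkeep : (edge c d).deleteEdges {s(a, b)} = edge c d :=
      deleteEdges_eq_self.mpr (by simpa [edge] using fun h => absurd (Sym2.eq_iff.mpr h) hne)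
    rw [deleteEdges_sup, hkeep]
  have hbridge : G.IsBridge s(a, b) := isAcyclic_iff_forall_isBridge.mp hG.isAcyclic hab
  have hcd : ¬(G.deleteEdges {s(a, b)}).Reachable c d := by
    intro hcd
    rw [isBridge_iff, hsplit, not_not] at hcyc
    exact hbridge ((reachable_sup_edge_iff hcd).mp hcyc)
  refine ⟨?_, (hG.isAcyclic.anti (deleteEdges_le _)).sup_edge_of_not_reachable hcd⟩
  rw [← hsplit]
  exact (hG.connected.mono le_sup_left).connected_delete_edge_of_not_isBridge hcyc

end SimpleGraph

open SimpleGraph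

theorem IsCycleEdgeSet.not_isBridge {V : Type*} [DecidableEq V] {C : Finset (Sym2 V)}
    {S : Set (Sym2 V)} (hC : IsCycleEdgeSet C) (hCS : ↑C ⊆ S) {e : Sym2 V} (he : e ∈ C) :
    ¬(fromEdgeSet S).IsBridge e := by
  obtain ⟨v, p, hp, hpC⟩ := hC
  refine fun hbridge => hbridge.notMem_edges_of_isCycle (hp.mapLe (fromEdgeSet_mono hCS)) ?_
  rwa [Walk.edges_mapLe_eq_edges, ← List.mem_toFinset, hpC]

theorem IsSpanningTree.insert_erase {V : Type*} [DecidableEq V] {G : SimpleGraph V}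
    {T : Finset (Sym2 V)} {e e' : Sym2 V} (hT : IsSpanningTree G T) (he'G : e' ∈ G.edgeSet)
    (he'T : e' ∉ T) (heT : e ∈ T) (hcyc : ¬(fromEdgeSet ↑(insert e' T)).IsBridge e) :
    IsSpanningTree G (insert e' (T.erase e)) := by
  refine ⟨?_, ?_⟩
  · rw [Finset.coe_insert, Finset.coe_erase]
    exact Set.insert_subset he'G (Set.sdiff_subset.trans hT.1)
  obtain ⟨a, b⟩ := e
  obtain ⟨c, d⟩ := e'
  have hab : (fromEdgeSet ↑T).Adj a b := (fromEdgeSet_adj _).mpr ⟨heT, G.ne_of_adj (hT.1 heT)⟩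
  have hadd : fromEdgeSet ↑(insert s(c, d) T) = fromEdgeSet ↑T ⊔ edge c d := by
    rw [Finset.coe_insert, Set.insert_eq, fromEdgeSet_union, sup_comm, edge]
  have hexchange : fromEdgeSet ↑(insert s(c, d) (T.erase s(a, b)))
      = (fromEdgeSet ↑T).deleteEdges {s(a, b)} ⊔ edge c d := by
    rw [Finset.coe_insert, Finset.coe_erase, Set.insert_eq, fromEdgeSet_union, sup_comm, edge,
      deleteEdges_fromEdgeSet]
  rw [hexchange]
  exact hT.2.deleteEdges_sup_edge hab (ne_of_mem_of_not_mem heT he'T) (hadd ▸ hcyc)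

open scoped symmDiff

namespace Finset

variable {α : Type*} [DecidableEq α] {s t : Finset α} {a b : α}

theorem sum_insert_erase {M : Type*} [AddCommGroup M] (f : α → M) (ha : a ∈ s) (hb : b ∉ s) :
    ∑ x ∈ insert b (s.erase a), f x = ∑ x ∈ s, f x - f a + f b := by
  rw [sum_insert (fun h => hb (mem_of_mem_erase h)), sum_erase_eq_sub ha, add_comm]

theorem card_symmDiff_insert_erase (ha : a ∈ s \ t) (hb : b ∈ t \ s) :
    #(insert b (s.erase a) ∆ t) + 2 = #(s ∆ t) := by
  have hexchange : insert b (s.erase a) ∆ t = ((s ∆ t).erase a).erase b := by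
    ext x
    simp only [mem_sdiff] at ha hb
    simp only [mem_symmDiff, mem_insert, mem_erase]
    grind
  have ha' : a ∈ s ∆ t := mem_symmDiff.mpr (.inl (mem_sdiff.mp ha))
  have hb' : b ∈ (s ∆ t).erase a :=
    mem_erase.mpr ⟨ne_of_mem_of_not_mem (mem_sdiff.mp ha).1 (mem_sdiff.mp hb).2 |>.symm,
      mem_symmDiff.mpr (.inr (mem_sdiff.mp hb))⟩
  rw [hexchange, ← card_erase_add_one ha', ← card_erase_add_one hb']

end Finset

theorem stmt15_general {V : Type*} [DecidableEq V] (G : SimpleGraph V)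
    (w : Sym2 V → ℝ) (T T' : Finset (Sym2 V))
    (hT : IsSpanningTree G T) (hT' : IsSpanningTree G T')
    (e' : Sym2 V) (he' : e' ∈ T' \ T) (he'min : ∀ f ∈ T' \ T, w e' ≤ w f)
    (C : Finset (Sym2 V)) (hCsub : C ⊆ insert e' T)
    (hCcyc : IsCycleEdgeSet C)
    (e : Sym2 V) (heC : e ∈ C) (heT' : e ∉ T')
    (C' : Finset (Sym2 V)) (hC'sub : C' ⊆ insert e T')
    (hC'cyc : IsCycleEdgeSet C') :
    (w e' ≤ w e →
      IsSpanningTree G (insert e' (T.erase e)) ∧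
      ∑ f ∈ insert e' (T.erase e), w f ≤ ∑ f ∈ T, w f ∧
      (((insert e' (T.erase e)) \ T') ∪ (T' \ (insert e' (T.erase e)))).card <
        ((T \ T') ∪ (T' \ T)).card) ∧
    (w e < w e' →
      ∀ e'' ∈ C', e'' ∉ T →
        IsSpanningTree G (insert e (T'.erase e'')) ∧
        ∑ f ∈ insert e (T'.erase e''), w f < ∑ f ∈ T', w f ∧
        (((insert e (T'.erase e'')) \ T) ∪ (T \ (insert e (T'.erase e'')))).card <
          ((T' \ T) ∪ (T \ T')).card) := by
  obtain ⟨he'T', he'T⟩ := Finset.mem_sdiff.mp he'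
  have heT : e ∈ T :=
    Finset.mem_of_mem_insert_of_ne (hCsub heC) (ne_of_mem_of_not_mem he'T' heT').symm
  refine ⟨fun hle => ⟨?_, ?_, ?_⟩, fun hlt e'' he''C' he''T => ?_⟩
  · exact hT.insert_erase (hT'.1 he'T') he'T heT
      (hCcyc.not_isBridge (Finset.coe_subset.mpr hCsub) heC)
  · rw [Finset.sum_insert_erase w heT he'T]
    linarith
  · have := Finset.card_symmDiff_insert_erase (Finset.mem_sdiff.mpr ⟨heT, heT'⟩) he'
    simp only [symmDiff_def, Finset.sup_eq_union] at this
    omega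
  have he''T' : e'' ∈ T' :=
    Finset.mem_of_mem_insert_of_ne (hC'sub he''C') (ne_of_mem_of_not_mem heT he''T).symm
  refine ⟨?_, ?_, ?_⟩
  · exact hT'.insert_erase (hT.1 heT) heT' he''T'
      (hC'cyc.not_isBridge (Finset.coe_subset.mpr hC'sub) he''C')
  · rw [Finset.sum_insert_erase w he''T' heT']
    linarith [he'min e'' (Finset.mem_sdiff.mpr ⟨he''T', he''T⟩)]
  · have := Finset.card_symmDiff_insert_erase (Finset.mem_sdiff.mpr ⟨he''T', he''T⟩)
      (Finset.mem_sdiff.mpr ⟨heT, heT'⟩)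
    simp only [symmDiff_def, Finset.sup_eq_union] at this
    omega

/-- One step of the greedy spanning-tree transformation. Let `T ≠ T'` be spanning
trees of a connected weighted graph, `e'` a minimum-weight edge of `T' \ T`, and
`e` an edge of the fundamental cycle `C_T(e')` not in `T'`. Then:
(a) if `w(e) ≥ w(e')`, then `T \ {e} ∪ {e'}` is a spanning tree of weight at most
`w(T)` whose symmetric difference with `T'` is strictly smaller; and
(b) if `w(e) < w(e')`, then for any edge `e''` of the fundamental cycle `C_{T'}(e)`
not in `T`, the set `T' \ {e''} ∪ {e}` is a spanning tree of weight strictly less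
than `w(T')` whose symmetric difference with `T` is strictly smaller. -/
theorem stmt15 {V : Type*} [Fintype V] [DecidableEq V] (G : SimpleGraph V)
    (hG : G.Connected) (w : Sym2 V → ℝ) (T T' : Finset (Sym2 V))
    (hT : IsSpanningTree G T) (hT' : IsSpanningTree G T') (hne : T ≠ T')
    (e' : Sym2 V) (he' : e' ∈ T' \ T) (he'min : ∀ f ∈ T' \ T, w e' ≤ w f)
    (C : Finset (Sym2 V)) (hCsub : C ⊆ insert e' T)
    (hCcyc : IsCycleEdgeSet C) (he'C : e' ∈ C)
    (e : Sym2 V) (heC : e ∈ C) (heT' : e ∉ T')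
    (C' : Finset (Sym2 V)) (hC'sub : C' ⊆ insert e T')
    (hC'cyc : IsCycleEdgeSet C') (heC' : e ∈ C') :
    (w e' ≤ w e →
      IsSpanningTree G (insert e' (T.erase e)) ∧
      ∑ f ∈ insert e' (T.erase e), w f ≤ ∑ f ∈ T, w f ∧
      (((insert e' (T.erase e)) \ T') ∪ (T' \ (insert e' (T.erase e)))).card <
        ((T \ T') ∪ (T' \ T)).card) ∧
    (w e < w e' →
      ∀ e'' ∈ C', e'' ∉ T →
        IsSpanningTree G (insert e (T'.erase e'')) ∧
        ∑ f ∈ insert e (T'.erase e''), w f < ∑ f ∈ T', w f ∧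
        (((insert e (T'.erase e'')) \ T) ∪ (T \ (insert e (T'.erase e'')))).card <
          ((T' \ T) ∪ (T \ T')).card) :=
  stmt15_general G w T T' hT hT' e' he' he'min C hCsub hCcyc e heC heT' C' hC'sub hC'cyc
end

section
/- Let M and M' be matchings of a graph G such that M △ M' is a single alternating cycle of positive length. Then in any sequence of matchings M = M_0, M_1, ..., M_k = M' where each M_{i+1} differs from M_i by adding one edge of M' and removing the adjacent edges of M_i, there is some intermediate index 0 < i < k with |M_i| < |M| (equivalently, |M_i| ≤ |M| − 1). -/
section

variable {V : Type*}

theorem SimpleGraph.Walk.IsCycle.exists_ne_mk_mem_edges {G : SimpleGraph V} {a v w : V}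
    {p : G.Walk a a} (hp : p.IsCycle) (h : s(v, w) ∈ p.edges) :
    ∃ x ≠ w, s(v, x) ∈ p.edges := by
  have hv : v ∈ p.support := p.fst_mem_support_of_mem_edges h
  obtain ⟨x, hx, hxw⟩ :=
    Set.exists_ne_of_one_lt_ncard (by rw [hp.ncard_neighborSet_toSubgraph_eq_two hv]; norm_num) w
  exact ⟨x, hxw, Walk.adj_toSubgraph_iff_mem_edges.mp hx⟩

theorem IsCycleEdgeSet.exists_ne_mk_mem [DecidableEq V] {C : Finset (Sym2 V)}
    (hC : IsCycleEdgeSet C) {v w : V} (h : s(v, w) ∈ C) : ∃ x ≠ w, s(v, x) ∈ C := by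
  obtain ⟨a, p, hp, hpC⟩ := hC
  rw [← hpC, List.mem_toFinset] at h
  rw [← hpC]
  simpa only [List.mem_toFinset] using hp.exists_ne_mk_mem_edges h

theorem IsMatching.exists_ne_mk_mem_of_isCycleEdgeSet [DecidableEq V] {G : SimpleGraph V}
    {M M' : Finset (Sym2 V)} (hM' : IsMatching G M') (hC : IsCycleEdgeSet ((M \ M') ∪ (M' \ M)))
    {v w : V} (h : s(v, w) ∈ M' \ M) : ∃ x ≠ w, s(v, x) ∈ M := by
  obtain ⟨x, hxw, hvx⟩ := hC.exists_ne_mk_mem (Finset.mem_union_right _ h)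
  refine ⟨x, hxw, ?_⟩
  rcases Finset.mem_union.mp hvx with hvx | hvx
  · exact (Finset.mem_sdiff.mp hvx).1
  · have hne : s(v, w) ≠ s(v, x) := fun heq => hxw (Sym2.congr_right.mp heq).symm
    exact absurd (Sym2.mem_mk_left v x)
      (hM'.2 _ (Finset.mem_sdiff.mp h).1 _ (Finset.mem_sdiff.mp hvx).1 hne v (Sym2.mem_mk_left v w))

theorem Finset.card_insert_filter_lt {α : Type*} [DecidableEq α] {s : Finset α} {p : α → Prop}
    [DecidablePred p] {a b : α} (ha : a ∈ s) (hb : b ∈ s) (hab : a ≠ b) (hpa : ¬p a)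
    (hpb : ¬p b) (x : α) : (insert x (s.filter p)).card < s.card := by
  have hpair : {a, b} ⊆ s.filter fun y => ¬p y := by
    simp only [Finset.insert_subset_iff, Finset.singleton_subset_iff, Finset.mem_filter]
    exact ⟨⟨ha, hpa⟩, hb, hpb⟩
  have hsplit := Finset.card_filter_add_card_filter_not (s := s) p
  have hrest := Finset.card_le_card hpair
  rw [Finset.card_pair hab] at hrest
  have hins := Finset.card_insert_le x (s.filter p)
  omega

end

theorem stmt19_general {V : Type*} [Fintype V] [DecidableEq V] (G : SimpleGraph V)
    (M M' : Finset (Sym2 V)) (hM' : IsMatching G M')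
    (hcard : M.card = M'.card) (hne : M ≠ M')
    (hcyc : IsCycleEdgeSet ((M \ M') ∪ (M' \ M)))
    (k : ℕ) (Ms : ℕ → Finset (Sym2 V)) (h0 : Ms 0 = M) (hk : Ms k = M')
    (hstep : ∀ i < k, ∃ e ∈ M' \ Ms i,
      Ms (i + 1) = insert e ((Ms i).filter fun f => ∀ v : V, v ∈ e → v ∉ f)) :
    ∃ i, 0 < i ∧ i < k ∧ (Ms i).card < M.card := by
  have hk0 : 0 < k := Nat.pos_of_ne_zero fun h => hne (h0 ▸ h ▸ hk)
  obtain ⟨e, he, h1⟩ := hstep 0 hk0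
  rw [h0] at he h1
  induction e using Sym2.ind with | _ u w =>
  have huw : u ≠ w := G.ne_of_adj (hM'.1 _ (Finset.mem_sdiff.mp he).1)
  obtain ⟨x, hxw, hux⟩ := hM'.exists_ne_mk_mem_of_isCycleEdgeSet hcyc he
  obtain ⟨y, -, hwy⟩ := hM'.exists_ne_mk_mem_of_isCycleEdgeSet hcyc (Sym2.eq_swap ▸ he)
  have hux_ne_hwy : s(u, x) ≠ s(w, y) := by
    rw [Ne, Sym2.eq_iff]; rintro (⟨h, -⟩ | ⟨-, h⟩) <;> contradiction
  have hlt : (Ms 1).card < M.card := h1 ▸ Finset.card_insert_filter_lt hux hwy hux_ne_hwy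
    (fun h => h u (Sym2.mem_mk_left u w) (Sym2.mem_mk_left u x))
    (fun h => h w (Sym2.mem_mk_right u w) (Sym2.mem_mk_left w y)) _
  have hk1 : 1 < k := by
    by_contra! hk1
    obtain rfl : k = 1 := by omega
    rw [hk, ← hcard] at hlt
    exact lt_irrefl _ hlt
  exact ⟨1, one_pos, hk1, hlt⟩

/-- If `M △ M'` is a single alternating cycle of positive length (so `M ≠ M'` and
`|M| = |M'|`), then any transformation `M = M_0, M_1, …, M_k = M'`, in which each
`M_{i+1}` is obtained from `M_i` by adding one edge of `M' \ M_i` and removing the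
edges of `M_i` incident to it, passes through some intermediate matching of size
strictly less than `|M|`. -/
theorem stmt19 {V : Type*} [Fintype V] [DecidableEq V] (G : SimpleGraph V)
    (M M' : Finset (Sym2 V)) (hM : IsMatching G M) (hM' : IsMatching G M')
    (hcard : M.card = M'.card) (hne : M ≠ M')
    (hcyc : IsCycleEdgeSet ((M \ M') ∪ (M' \ M)))
    (k : ℕ) (Ms : ℕ → Finset (Sym2 V)) (h0 : Ms 0 = M) (hk : Ms k = M')
    (hstep : ∀ i < k, ∃ e ∈ M' \ Ms i,
      Ms (i + 1) = insert e ((Ms i).filter fun f => ∀ v : V, v ∈ e → v ∉ f)) :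
    ∃ i, 0 < i ∧ i < k ∧ (Ms i).card < M.card :=
  stmt19_general G M M' hM' hcard hne hcyc k Ms h0 hk hstep
end
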